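/- arXiv:2112.03969 — 2 statements merged into one kernel-verified Lean document; each statement's English description precedes it below -/
import Mathlib

section
/- Let P ∈ ℝ^{n×n} be symmetric positive definite and f : ℝ^n → ℝ^m be bounded and measurable. Define x̄(m) = ∫ f(x) N(x; m, P) dx, where N(·; m, P) is the Gaussian density with mean m and covariance P. Then x̄ is differentiable in m and its Jacobian satisfies J_{x̄}(m) = (∫ (f(x) − x̄(m)) (x − m)ᵀ N(x; m, P) dx) P⁻¹, i.e., the Jacobian of the Gaussian-smoothed function equals the SLR gain Ψᵀ P⁻¹ evaluated at m. -/
open MeasureTheory Matrix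

/-- The multivariate Gaussian density `N(x; m, P)`. -/
noncomputable def gaussianDensity {n : ℕ} (m : Fin n → ℝ) (P : Matrix (Fin n) (Fin n) ℝ)
    (x : Fin n → ℝ) : ℝ :=
  (Real.sqrt ((2 * Real.pi) ^ n * P.det))⁻¹ *
    Real.exp (-(1 / 2) * ((x - m) ⬝ᵥ (P⁻¹ *ᵥ (x - m))))

/-!
Differentiate under the integral sign. As a function of the mean, the density has gradient
`N(x; m, P) P⁻¹ (x - m)`, and positive definiteness gives a tail bound
`N(x; m, P) ≤ K exp (-c ‖x - m‖²)` which, uniformly for `m` in a unit ball, dominates this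
gradient times the bounded `f`. This gives the Jacobian `(∫ f(x) (x - m)ᵀ N(x; m, P) dx) P⁻¹`;
subtracting `x̄(m)` from `f` does not change it, because the Gaussian is symmetric about its mean
and so has vanishing centred first moment.
-/

open Real

namespace Matrix

variable {ι : Type*} [Fintype ι]

theorem PosDef.exists_pos_mul_sq_norm_le {A : Matrix ι ι ℝ} (hA : A.PosDef) :
    ∃ c, 0 < c ∧ ∀ y : ι → ℝ, c * ‖y‖ ^ 2 ≤ y ⬝ᵥ (A *ᵥ y) := by
  have hq : Continuous fun y : ι → ℝ => y ⬝ᵥ (A *ᵥ y) := by fun_prop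
  obtain ⟨c, hc, hcle⟩ := (isCompact_sphere (0 : ι → ℝ) 1).exists_forall_le' hq.continuousOn
    (a := 0) fun y hy => by
      simpa using hA.dotProduct_mulVec_pos (ne_zero_of_mem_sphere one_ne_zero ⟨y, hy⟩)
  refine ⟨c, hc, fun y => ?_⟩
  rcases eq_or_ne y 0 with rfl | hy
  · simp
  have hy' : 0 < ‖y‖ := norm_pos_iff.2 hy
  have hunit := hcle (‖y‖⁻¹ • y) (by simp [norm_smul, hy'.ne'])
  rw [mulVec_smul, dotProduct_smul, smul_dotProduct, smul_eq_mul, smul_eq_mul, ← mul_assoc,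
    ← sq, inv_pow, le_inv_mul_iff₀ (by positivity)] at hunit
  linarith

noncomputable def toContinuousLinearMap₂' (A : Matrix ι ι ℝ) :
    (ι → ℝ) →L[ℝ] (ι → ℝ) →L[ℝ] ℝ :=
  LinearMap.toContinuousLinearMap <|
    (LinearMap.toContinuousLinearMap : ((ι → ℝ) →ₗ[ℝ] ℝ) ≃ₗ[ℝ] _).toLinearMap ∘ₗ
      LinearMap.mk₂ ℝ (fun u v => u ⬝ᵥ (A *ᵥ v)) (fun _ _ _ => add_dotProduct _ _ _)
        (fun _ _ _ => smul_dotProduct _ _ _) (fun _ _ _ => by rw [mulVec_add, dotProduct_add])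
        (fun _ _ _ => by rw [mulVec_smul, dotProduct_smul])

@[simp]
theorem toContinuousLinearMap₂'_apply (A : Matrix ι ι ℝ) (u v : ι → ℝ) :
    A.toContinuousLinearMap₂' u v = u ⬝ᵥ (A *ᵥ v) := rfl

theorem IsSymm.hasFDerivAt_dotProduct_mulVec {A : Matrix ι ι ℝ} (hA : A.IsSymm) (y : ι → ℝ) :
    HasFDerivAt (fun y => y ⬝ᵥ (A *ᵥ y)) (2 • A.toContinuousLinearMap₂' y) y := by
  refine (A.toContinuousLinearMap₂'.hasFDerivAt_of_bilinear (hasFDerivAt_id y)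
    (hasFDerivAt_id y)).congr_fderiv (ContinuousLinearMap.ext fun v => ?_)
  simp [two_smul, dotProduct_mulVec v, ← mulVec_transpose, hA.eq, dotProduct_comm (A *ᵥ v)]

end Matrix

section GaussianTail

variable {E : Type*} [NormedAddCommGroup E] [NormedSpace ℝ E] [FiniteDimensional ℝ E]
  [MeasurableSpace E] [BorelSpace E] (μ : Measure E) [μ.IsAddHaarMeasure]

theorem integrable_norm_pow_mul_exp_neg_mul_sq_norm {b : ℝ} (hb : 0 < b) (k : ℕ) :
    Integrable (fun x : E => ‖x‖ ^ k * exp (-b * ‖x‖ ^ 2)) μ := by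
  rcases subsingleton_or_nontrivial E with _ | _
  · exact (integrable_const ((0 : ℝ) ^ k * exp 0)).congr
      (.of_forall fun x => by simp [Subsingleton.elim x 0])
  · rw [integrable_fun_norm_addHaar μ (f := fun t => t ^ k * exp (-b * t ^ 2))]
    refine (integrableOn_rpow_mul_exp_neg_mul_sq hb (s := (Module.finrank ℝ E - 1 + k : ℕ))
      (neg_one_lt_zero.trans_le (Nat.cast_nonneg _))).congr_fun (fun t _ => ?_) measurableSet_Ioi
    simp only [smul_eq_mul, Real.rpow_natCast, pow_add, mul_assoc]

end GaussianTail

theorem exp_neg_mul_sq_norm_sub_le {G : Type*} [SeminormedAddCommGroup G] {c : ℝ} (hc : 0 ≤ c)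
    {x y z : G} (hyz : ‖y - z‖ ≤ 1) :
    exp (-c * ‖x - y‖ ^ 2) ≤ exp c * exp (-(c / 2) * ‖x - z‖ ^ 2) := by
  rw [← exp_add, exp_le_exp]
  have htri := norm_sub_le_norm_sub_add_norm_sub x y z
  have hsq : ‖x - z‖ ^ 2 ≤ 2 * ‖x - y‖ ^ 2 + 2 := by
    nlinarith [pow_le_pow_left₀ (norm_nonneg _) htri 2, sq_nonneg (‖x - y‖ - ‖y - z‖),
      norm_nonneg (y - z)]
  nlinarith

section Gaussian

variable {n : ℕ} {P : Matrix (Fin n) (Fin n) ℝ}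

theorem gaussianDensity_nonneg (μ x : Fin n → ℝ) : 0 ≤ gaussianDensity μ P x := by
  unfold gaussianDensity
  positivity

@[fun_prop]
theorem continuous_gaussianDensity (μ : Fin n → ℝ) : Continuous (gaussianDensity μ P) := by
  unfold gaussianDensity
  fun_prop

theorem exists_gaussianDensity_le (hP : P.PosDef) :
    ∃ K c : ℝ, 0 ≤ K ∧ 0 < c ∧ ∀ μ x, gaussianDensity μ P x ≤ K * exp (-c * ‖x - μ‖ ^ 2) := by
  obtain ⟨c, hc, hle⟩ := hP.inv.exists_pos_mul_sq_norm_le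
  refine ⟨(√((2 * π) ^ n * P.det))⁻¹, c / 2, by positivity, half_pos hc, fun μ x => ?_⟩
  refine mul_le_mul_of_nonneg_left (exp_le_exp.2 ?_) (by positivity)
  nlinarith [hle (x - μ)]

theorem integrable_norm_sub_pow_mul_gaussianDensity (hP : P.PosDef) (μ : Fin n → ℝ) (k : ℕ) :
    Integrable (fun x => ‖x - μ‖ ^ k * gaussianDensity μ P x) := by
  obtain ⟨K, c, -, hc, hle⟩ := exists_gaussianDensity_le hP
  refine (((integrable_norm_pow_mul_exp_neg_mul_sq_norm volume hc k).comp_sub_right μ).const_mul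
    K).mono' (by fun_prop) (.of_forall fun x => ?_)
  rw [Real.norm_of_nonneg (mul_nonneg (by positivity) (gaussianDensity_nonneg μ x))]
  calc ‖x - μ‖ ^ k * gaussianDensity μ P x ≤ ‖x - μ‖ ^ k * (K * exp (-c * ‖x - μ‖ ^ 2)) := by
        gcongr
        exact hle μ x
    _ = K * (‖x - μ‖ ^ k * exp (-c * ‖x - μ‖ ^ 2)) := by ring

theorem exists_integrable_bound_gaussianDensity_mul_norm_sub (hP : P.PosDef) (μ₀ : Fin n → ℝ) :
    ∃ G : (Fin n → ℝ) → ℝ, Integrable G ∧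
      ∀ μ ∈ Metric.ball μ₀ 1, ∀ x, ‖x - μ‖ * gaussianDensity μ P x ≤ G x := by
  obtain ⟨K, c, hK, hc, hle⟩ := exists_gaussianDensity_le hP
  have htail (k : ℕ) :=
    (integrable_norm_pow_mul_exp_neg_mul_sq_norm volume (half_pos hc) k).comp_sub_right μ₀
  refine ⟨fun x => K * exp c * ((‖x - μ₀‖ + 1) * exp (-(c / 2) * ‖x - μ₀‖ ^ 2)),
    ((htail 1).add (htail 0)).const_mul (K * exp c) |>.congr
      (.of_forall fun x => by simp [add_mul]), ?_⟩
  intro μ hμ x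
  have hdist : ‖μ - μ₀‖ ≤ 1 := (mem_ball_iff_norm.1 hμ).le
  have hnorm : ‖x - μ‖ ≤ ‖x - μ₀‖ + 1 := by
    linarith [norm_sub_le_norm_sub_add_norm_sub x μ₀ μ, norm_sub_rev μ μ₀]
  calc ‖x - μ‖ * gaussianDensity μ P x
      ≤ (‖x - μ₀‖ + 1) * (K * (exp c * exp (-(c / 2) * ‖x - μ₀‖ ^ 2))) := by
        refine mul_le_mul hnorm ((hle μ x).trans ?_) (gaussianDensity_nonneg μ x) (by positivity)
        gcongr
        exact exp_neg_mul_sq_norm_sub_le hc.le hdist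
    _ = _ := by ring

theorem hasFDerivAt_gaussianDensity_mean (hP : P.IsHermitian) (x μ₀ : Fin n → ℝ) :
    HasFDerivAt (fun μ => gaussianDensity μ P x)
      (gaussianDensity μ₀ P x • P⁻¹.toContinuousLinearMap₂' (x - μ₀)) μ₀ := by
  have hq := ((isHermitian_iff_isSymm.1 hP.inv).hasFDerivAt_dotProduct_mulVec (x - μ₀)).comp μ₀
    ((hasFDerivAt_id μ₀).const_sub x)
  refine ((hq.const_mul (-(1 / 2))).exp.const_mul _).congr_fderiv
    (ContinuousLinearMap.ext fun v => ?_)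
  simp [gaussianDensity]
  ring

section Smoothing

variable {F : Type*} [NormedAddCommGroup F] [NormedSpace ℝ F]
  {f : (Fin n → ℝ) → F} {C : ℝ}

theorem integrable_gaussianDensity_smul (hP : P.PosDef) (hf : AEStronglyMeasurable f)
    (hC : ∀ x, ‖f x‖ ≤ C) (μ : Fin n → ℝ) :
    Integrable (fun x => gaussianDensity μ P x • f x) := by
  have hg : Integrable (gaussianDensity μ P) := by
    simpa using integrable_norm_sub_pow_mul_gaussianDensity hP μ 0
  exact hg.smul_bdd C hf (.of_forall hC)

theorem norm_gaussianDensity_smul_smulRight_le {x : Fin n → ℝ} (hCx : ‖f x‖ ≤ C)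
    (μ : Fin n → ℝ) :
    ‖(gaussianDensity μ P x • P⁻¹.toContinuousLinearMap₂' (x - μ)).smulRight (f x)‖ ≤
      ‖P⁻¹.toContinuousLinearMap₂'‖ * C * (‖x - μ‖ * gaussianDensity μ P x) := by
  rw [ContinuousLinearMap.norm_smulRight_apply, norm_smul,
    Real.norm_of_nonneg (gaussianDensity_nonneg μ x)]
  have hC : 0 ≤ C := (norm_nonneg _).trans hCx
  have hg : 0 ≤ gaussianDensity μ P x := gaussianDensity_nonneg μ x
  calc gaussianDensity μ P x * ‖P⁻¹.toContinuousLinearMap₂' (x - μ)‖ * ‖f x‖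
      ≤ gaussianDensity μ P x * (‖P⁻¹.toContinuousLinearMap₂'‖ * ‖x - μ‖) * C := by
        gcongr
        exact ContinuousLinearMap.le_opNorm _ _
    _ = _ := by ring

theorem integrable_gaussianDensity_smul_smulRight (hP : P.PosDef) (hf : AEStronglyMeasurable f)
    (hC : ∀ x, ‖f x‖ ≤ C) (μ : Fin n → ℝ) :
    Integrable fun x =>
      (gaussianDensity μ P x • P⁻¹.toContinuousLinearMap₂' (x - μ)).smulRight (f x) := by
  refine (((integrable_norm_sub_pow_mul_gaussianDensity hP μ 1).const_mul
    (‖P⁻¹.toContinuousLinearMap₂'‖ * C))).mono' ?_ (.of_forall fun x => ?_)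
  · exact (ContinuousLinearMap.smulRightL ℝ (Fin n → ℝ) F).aestronglyMeasurable_comp₂
      (Continuous.aestronglyMeasurable (by fun_prop)) hf
  · simpa using norm_gaussianDensity_smul_smulRight_le (hC x) μ

theorem hasFDerivAt_integral_gaussianDensity_smul (hP : P.PosDef) (hf : AEStronglyMeasurable f)
    (hC : ∀ x, ‖f x‖ ≤ C) (μ₀ : Fin n → ℝ) :
    HasFDerivAt (fun μ => ∫ x, gaussianDensity μ P x • f x)
      (∫ x, (gaussianDensity μ₀ P x • P⁻¹.toContinuousLinearMap₂' (x - μ₀)).smulRight (f x))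
      μ₀ := by
  obtain ⟨G, hG, hGle⟩ := exists_integrable_bound_gaussianDensity_mul_norm_sub hP μ₀
  refine hasFDerivAt_integral_of_dominated_of_fderiv_le
    (bound := fun x => ‖P⁻¹.toContinuousLinearMap₂'‖ * C * G x)
    (Metric.ball_mem_nhds μ₀ one_pos)
    (.of_forall fun μ => (integrable_gaussianDensity_smul hP hf hC μ).aestronglyMeasurable)
    (integrable_gaussianDensity_smul hP hf hC μ₀)
    (integrable_gaussianDensity_smul_smulRight hP hf hC μ₀).aestronglyMeasurable
    (.of_forall fun x μ hμ => ?_) (hG.const_mul _)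
    (.of_forall fun x μ _ => (hasFDerivAt_gaussianDensity_mean hP.isHermitian x μ).smul_const _)
  simpa [mul_assoc] using (norm_gaussianDensity_smul_smulRight_le (hC x) μ).trans
    (mul_le_mul_of_nonneg_left (hGle μ hμ x)
      (mul_nonneg (ContinuousLinearMap.opNorm_nonneg _) ((norm_nonneg _).trans (hC x))))

end Smoothing

theorem integral_sub_apply_mul_gaussianDensity (μ : Fin n → ℝ) (k : Fin n) :
    ∫ x, (x k - μ k) * gaussianDensity μ P x = 0 := by
  have hshift :
      ∫ x, (x k - μ k) * gaussianDensity μ P x = ∫ y, y k * gaussianDensity 0 P y := by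
    rw [← integral_add_right_eq_self _ μ]
    simp [gaussianDensity]
  have hodd : ∫ y, y k * gaussianDensity 0 P y = -∫ y, y k * gaussianDensity 0 P y := by
    rw [← integral_neg, ← integral_neg_eq_self]
    simp [gaussianDensity, mulVec_neg]
  linarith

theorem integrable_sub_apply_mul_gaussianDensity (hP : P.PosDef) (μ : Fin n → ℝ) (k : Fin n) :
    Integrable fun x => (x k - μ k) * gaussianDensity μ P x := by
  refine (integrable_norm_sub_pow_mul_gaussianDensity hP μ 1).mono' (by fun_prop)
    (.of_forall fun x => ?_)
  rw [norm_mul, Real.norm_of_nonneg (gaussianDensity_nonneg μ x), pow_one]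
  exact mul_le_mul_of_nonneg_right (norm_le_pi_norm (x - μ) k) (gaussianDensity_nonneg μ x)

theorem integral_sub_mul_sub_apply_mul_gaussianDensity (hP : P.PosDef) {h : (Fin n → ℝ) → ℝ}
    (hh : AEStronglyMeasurable h) {C : ℝ} (hC : ∀ x, ‖h x‖ ≤ C) (μ : Fin n → ℝ) (k : Fin n)
    (b : ℝ) :
    ∫ x, (h x - b) * (x k - μ k) * gaussianDensity μ P x =
      ∫ x, h x * (x k - μ k) * gaussianDensity μ P x := by
  have hI := integrable_sub_apply_mul_gaussianDensity hP μ k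
  simp_rw [mul_assoc, sub_mul (h _)]
  rw [integral_sub (hI.bdd_mul hh (.of_forall hC)) (hI.const_mul b), integral_const_mul,
    integral_sub_apply_mul_gaussianDensity, mul_zero, sub_zero]

theorem integral_gaussianDensity_smul_smulRight_eq_mulVecLin {m : ℕ} (hP : P.PosDef)
    {f : (Fin n → ℝ) → Fin m → ℝ} (hf : AEStronglyMeasurable f) {C : ℝ} (hC : ∀ x, ‖f x‖ ≤ C)
    (μ : Fin n → ℝ) :
    ∫ x, (gaussianDensity μ P x • P⁻¹.toContinuousLinearMap₂' (x - μ)).smulRight (f x) =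
      LinearMap.toContinuousLinearMap (mulVecLin
        (of (fun j k => ∫ x, f x j * (x k - μ k) * gaussianDensity μ P x) * P⁻¹)) := by
  refine ContinuousLinearMap.ext fun v => funext fun j => ?_
  have hfj : AEStronglyMeasurable fun x => f x j :=
    (continuous_apply j).comp_aestronglyMeasurable hf
  have hfj_le (x) : ‖f x j‖ ≤ C := (norm_le_pi_norm (f x) j).trans (hC x)
  have hint (k : Fin n) : Integrable fun x => f x j * (x k - μ k) * gaussianDensity μ P x := by
    simpa only [mul_assoc] using
      (integrable_sub_apply_mul_gaussianDensity hP μ k).bdd_mul hfj (.of_forall hfj_le)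
  calc _ = ∫ x,
          (gaussianDensity μ P x • P⁻¹.toContinuousLinearMap₂' (x - μ)).smulRight (f x) v j :=
        (((ContinuousLinearMap.proj (R := ℝ) (φ := fun _ : Fin m => ℝ) j).comp
          (ContinuousLinearMap.apply ℝ (Fin m → ℝ) v)).integral_comp_comm
          (integrable_gaussianDensity_smul_smulRight hP hf hC μ)).symm
    _ = ∫ x, ∑ k, f x j * (x k - μ k) * gaussianDensity μ P x * (P⁻¹ *ᵥ v) k := by
        congr 1 with x
        simp only [ContinuousLinearMap.smulRight_apply, _root_.smul_apply,
          toContinuousLinearMap₂'_apply, dotProduct, Pi.smul_apply, Pi.sub_apply, smul_eq_mul,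
          Finset.mul_sum, Finset.sum_mul]
        exact Finset.sum_congr rfl fun k _ => by ring
    _ = _ := by
        rw [integral_finsetSum _ fun k _ => (hint k).mul_const _]
        simp [mulVec, dotProduct, integral_mul_const]

end Gaussian

/-- the Jacobian of the Gaussian-smoothed function `x̄(m) = ∫ f(x) N(x; m, P) dx`
equals the SLR gain `Ψᵀ P⁻¹` evaluated at `m`. -/
theorem jacobian_of_gaussian_smoothed_eq_slr_gain
    {n m : ℕ} (P : Matrix (Fin n) (Fin n) ℝ) (hP : P.PosDef)
    (f : (Fin n → ℝ) → (Fin m → ℝ)) (hfmeas : Measurable f)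
    (hfbdd : ∃ C : ℝ, ∀ x, ‖f x‖ ≤ C)
    (xbar : (Fin n → ℝ) → (Fin m → ℝ))
    (hxbar : ∀ (mu : Fin n → ℝ) (j : Fin m),
      xbar mu j = ∫ x, f x j * gaussianDensity mu P x)
    (Ψt : (Fin n → ℝ) → Matrix (Fin m) (Fin n) ℝ)
    (hΨt : ∀ (mu : Fin n → ℝ) (j : Fin m) (i : Fin n),
      Ψt mu j i = ∫ x, (f x j - xbar mu j) * (x i - mu i) * gaussianDensity mu P x) :
    ∀ mu : Fin n → ℝ,
      HasFDerivAt xbar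
        (LinearMap.toContinuousLinearMap (Matrix.mulVecLin (Ψt mu * P⁻¹))) mu := by
  intro mu
  obtain ⟨C, hC⟩ := hfbdd
  have hf : AEStronglyMeasurable f := hfmeas.aestronglyMeasurable
  have hfj_le (j : Fin m) (x) : ‖f x j‖ ≤ C := (norm_le_pi_norm (f x) j).trans (hC x)
  have hxbar_eq : xbar = fun μ => ∫ x, gaussianDensity μ P x • f x := by
    funext μ j
    rw [hxbar, eval_integral (integrable_gaussianDensity_smul hP hf hC μ).eval]
    simp [mul_comm]
  have hΨt_eq : Ψt mu = of fun j k => ∫ x, f x j * (x k - mu k) * gaussianDensity mu P x := by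
    ext j k
    rw [hΨt, of_apply, integral_sub_mul_sub_apply_mul_gaussianDensity hP
      ((continuous_apply j).comp_aestronglyMeasurable hf) (hfj_le j)]
  rw [hxbar_eq, hΨt_eq, ← integral_gaussianDensity_smul_smulRight_eq_mulVecLin hP hf hC]
  exact hasFDerivAt_integral_gaussianDensity_smul hP hf hC mu
end

section
/- Consider a Gaussian prior x ~ N(m, P) on ℝ^n with P positive definite and an affine measurement y = H x + c + r with r ~ N(0, R), R positive definite. Let (m₁, P₁) be the result of applying two sequential Kalman updates with pseudo-measurement splitting: first update (m, P) with measurement y (matrix H, offset c, noise R), then update the result with the pseudo-measurement x̂ (identity matrix, noise λ⁻¹S). Then m₁ is the unique minimizer of x ↦ ½(x−m)ᵀP⁻¹(x−m) + ½(y − Hx − c)ᵀR⁻¹(y − Hx − c) + (λ/2)(x − x̂)ᵀS⁻¹(x − x̂). -/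
/-!
In information form a Kalman update adds `Hᵀ R⁻¹ H` to the precision `P⁻¹` and
`Hᵀ R⁻¹ (y - c)` to the information vector `P⁻¹ m`. The regularization step is the update with
`H = 1`, `R = λ⁻¹ S`, so after both updates
`(P⁻¹ + Hᵀ R⁻¹ H + λ S⁻¹) m₁ = P⁻¹ m + Hᵀ R⁻¹ (y - c) + λ S⁻¹ x̂`.
These are exactly the normal equations of the cost, whose Hessian is that positive definite sum;
being quadratic, the cost exceeds its value at `m₁` by `½ (x - m₁)ᵀ A (x - m₁) > 0`.
-/

open Matrix

variable {ι κ : Type*} [Fintype ι] [Fintype κ]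

lemma Matrix.IsSymm.add_dotProduct_mulVec_add {W : Matrix ι ι ℝ} (hW : W.IsSymm) (u e : ι → ℝ) :
    (u + e) ⬝ᵥ (W *ᵥ (u + e)) = u ⬝ᵥ (W *ᵥ u) + 2 * (e ⬝ᵥ (W *ᵥ u)) + e ⬝ᵥ (W *ᵥ e) := by
  have hcomm : u ⬝ᵥ (W *ᵥ e) = e ⬝ᵥ (W *ᵥ u) := by
    simpa only [hW.eq] using dotProduct_transpose_mulVec W u e
  simp only [mulVec_add, dotProduct_add, add_dotProduct, hcomm]
  ring

section KalmanUpdate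

variable {P : Matrix ι ι ℝ} {H : Matrix κ ι ℝ} {R S : Matrix κ κ ℝ} {K : Matrix ι κ ℝ}

lemma kalmanUpdate_innovation_posDef (hP : P.PosDef) (hR : R.PosDef) :
    (H * P * Hᵀ + R).PosDef := by
  simpa using PosDef.posSemidef_add (hP.posSemidef.mul_mul_conjTranspose_same H) hR

variable [DecidableEq ι] [DecidableEq κ]

lemma kalmanUpdate_information_mul_gain (hP : P.PosDef) (hR : R.PosDef)
    (hS : S = H * P * Hᵀ + R) (hK : K = P * Hᵀ * S⁻¹) :
    (P⁻¹ + Hᵀ * R⁻¹ * H) * K = Hᵀ * R⁻¹ := by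
  have hSpos : S.PosDef := hS ▸ kalmanUpdate_innovation_posDef hP hR
  calc (P⁻¹ + Hᵀ * R⁻¹ * H) * K
      = (P⁻¹ * P) * Hᵀ * S⁻¹ + Hᵀ * (R⁻¹ * (H * P * Hᵀ)) * S⁻¹ := by
        simp only [hK, Matrix.add_mul, Matrix.mul_assoc]
    _ = Hᵀ * (R⁻¹ * R) * S⁻¹ + Hᵀ * (R⁻¹ * (H * P * Hᵀ)) * S⁻¹ := by
        rw [nonsing_inv_mul P ((isUnit_iff_isUnit_det P).mp hP.isUnit),
          nonsing_inv_mul R ((isUnit_iff_isUnit_det R).mp hR.isUnit), Matrix.one_mul,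
          Matrix.mul_one]
    _ = Hᵀ * R⁻¹ * (S * S⁻¹) := by
        simp only [hS, Matrix.mul_add, Matrix.add_mul, Matrix.mul_assoc]
        abel
    _ = Hᵀ * R⁻¹ := by
        rw [mul_nonsing_inv S ((isUnit_iff_isUnit_det S).mp hSpos.isUnit), Matrix.mul_one]

lemma kalmanUpdate_information_mul_cov (hP : P.PosDef) (hR : R.PosDef)
    (hS : S = H * P * Hᵀ + R) (hK : K = P * Hᵀ * S⁻¹) :
    (P⁻¹ + Hᵀ * R⁻¹ * H) * (P - K * S * Kᵀ) = 1 := by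
  have hSpos : S.PosDef := hS ▸ kalmanUpdate_innovation_posDef hP hR
  have hKt : Kᵀ = S⁻¹ * H * P := by
    rw [hK, transpose_mul, transpose_mul, transpose_nonsing_inv, transpose_transpose,
      (isHermitian_iff_isSymm.mp hP.isHermitian).eq,
      (isHermitian_iff_isSymm.mp hSpos.isHermitian).eq, Matrix.mul_assoc]
  calc (P⁻¹ + Hᵀ * R⁻¹ * H) * (P - K * S * Kᵀ)
      = (P⁻¹ + Hᵀ * R⁻¹ * H) * P - (P⁻¹ + Hᵀ * R⁻¹ * H) * K * (S * S⁻¹) * H * P := by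
        simp only [hKt, Matrix.mul_sub, Matrix.mul_assoc]
    _ = 1 := by
        rw [kalmanUpdate_information_mul_gain hP hR hS hK,
          mul_nonsing_inv S ((isUnit_iff_isUnit_det S).mp hSpos.isUnit), Matrix.mul_one,
          Matrix.add_mul, nonsing_inv_mul P ((isUnit_iff_isUnit_det P).mp hP.isUnit)]
        simp only [Matrix.mul_assoc, add_sub_cancel_right]

lemma kalmanUpdate_cov_inv (hP : P.PosDef) (hR : R.PosDef)
    (hS : S = H * P * Hᵀ + R) (hK : K = P * Hᵀ * S⁻¹) :
    (P - K * S * Kᵀ)⁻¹ = P⁻¹ + Hᵀ * R⁻¹ * H :=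
  inv_eq_left_inv (kalmanUpdate_information_mul_cov hP hR hS hK)

lemma kalmanUpdate_cov_posDef (hP : P.PosDef) (hR : R.PosDef)
    (hS : S = H * P * Hᵀ + R) (hK : K = P * Hᵀ * S⁻¹) :
    (P - K * S * Kᵀ).PosDef := by
  have hinfo : (P⁻¹ + Hᵀ * R⁻¹ * H).PosDef := by
    simpa using hP.inv.add_posSemidef (hR.inv.posSemidef.conjTranspose_mul_mul_same H)
  simpa only [inv_eq_right_inv (kalmanUpdate_information_mul_cov hP hR hS hK)] using hinfo.inv

lemma kalmanUpdate_information_mulVec_mean (hP : P.PosDef) (hR : R.PosDef)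
    (hS : S = H * P * Hᵀ + R) (hK : K = P * Hᵀ * S⁻¹) (m : ι → ℝ) (y c : κ → ℝ) :
    (P⁻¹ + Hᵀ * R⁻¹ * H) *ᵥ (m + K *ᵥ (y - (H *ᵥ m + c))) =
      P⁻¹ *ᵥ m + Hᵀ *ᵥ (R⁻¹ *ᵥ (y - c)) := by
  rw [mulVec_add, mulVec_mulVec, kalmanUpdate_information_mul_gain hP hR hS hK]
  simp only [add_mulVec, ← mulVec_mulVec, mulVec_sub, mulVec_add]
  abel

end KalmanUpdate

lemma regularizationUpdate_information_mulVec_mean [DecidableEq ι] {P S T K : Matrix ι ι ℝ}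
    {lam : ℝ} (hP : P.PosDef) (hS : S.PosDef) (hlam : 0 < lam) (hT : T = P + lam⁻¹ • S)
    (hK : K = P * T⁻¹) (m xhat : ι → ℝ) :
    (P⁻¹ + lam • S⁻¹) *ᵥ (m + K *ᵥ (xhat - m)) = P⁻¹ *ᵥ m + lam • (S⁻¹ *ᵥ xhat) := by
  have hinv : (lam⁻¹ • S)⁻¹ = lam • S⁻¹ := inv_eq_left_inv <| by
    rw [smul_mul_smul_comm, mul_inv_cancel₀ hlam.ne', one_smul,
      nonsing_inv_mul S ((isUnit_iff_isUnit_det S).mp hS.isUnit)]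
  simpa [hinv, smul_mulVec] using kalmanUpdate_information_mulVec_mean (H := 1) (S := T) (K := K) hP
    (hS.smul (inv_pos.mpr hlam)) (by simp [hT]) (by simp [hK]) m xhat 0

section RegularizedCost

variable (Wp : Matrix ι ι ℝ) (Wr : Matrix κ κ ℝ) (Ws : Matrix ι ι ℝ) (lam : ℝ) (m xhat : ι → ℝ)
  (H : Matrix κ ι ℝ) (c y : κ → ℝ)

/-- The weights `Wp`, `Wr`, `Ws` stand for the precisions `P⁻¹`, `R⁻¹`, `S⁻¹`. -/
noncomputable def regularizedCost (x : ι → ℝ) : ℝ :=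
  (1 / 2) * ((x - m) ⬝ᵥ (Wp *ᵥ (x - m))) +
    (1 / 2) * ((y - (H *ᵥ x + c)) ⬝ᵥ (Wr *ᵥ (y - (H *ᵥ x + c)))) +
    (lam / 2) * ((x - xhat) ⬝ᵥ (Ws *ᵥ (x - xhat)))

variable {Wp Wr Ws lam m xhat H c y}

lemma regularizedCost_add (hWp : Wp.IsSymm) (hWr : Wr.IsSymm) (hWs : Ws.IsSymm)
    (x dx : ι → ℝ) :
    regularizedCost Wp Wr Ws lam m xhat H c y (x + dx) =
      regularizedCost Wp Wr Ws lam m xhat H c y x +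
        dx ⬝ᵥ ((Wp + Hᵀ * Wr * H + lam • Ws) *ᵥ x -
          (Wp *ᵥ m + Hᵀ *ᵥ (Wr *ᵥ (y - c)) + lam • (Ws *ᵥ xhat))) +
        (1 / 2) * (dx ⬝ᵥ ((Wp + Hᵀ * Wr * H + lam • Ws) *ᵥ dx)) := by
  have hprior : x + dx - m = (x - m) + dx := by abel
  have hmeas : y - (H *ᵥ (x + dx) + c) = (y - (H *ᵥ x + c)) + -(H *ᵥ dx) := by
    rw [mulVec_add]; abel
  have hreg : x + dx - xhat = (x - xhat) + dx := by abel
  have hHt : ∀ v, dx ⬝ᵥ (Hᵀ *ᵥ v) = (H *ᵥ dx) ⬝ᵥ v := fun v => by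
    rw [dotProduct_mulVec, vecMul_transpose]
  rw [regularizedCost, regularizedCost, hprior, hmeas, hreg, hWp.add_dotProduct_mulVec_add,
    hWr.add_dotProduct_mulVec_add, hWs.add_dotProduct_mulVec_add]
  simp only [add_mulVec, smul_mulVec, ← mulVec_mulVec, hHt, mulVec_sub, mulVec_add, mulVec_neg,
    dotProduct_add, dotProduct_sub, dotProduct_smul, dotProduct_neg, neg_dotProduct, smul_eq_mul]
  ring

lemma regularizedCost_lt_of_normal_eq (hWp : Wp.PosDef) (hWr : Wr.PosSemidef)
    (hWs : Ws.PosSemidef) (hlam : 0 ≤ lam) {x₀ : ι → ℝ}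
    (hx₀ : (Wp + Hᵀ * Wr * H + lam • Ws) *ᵥ x₀ =
      Wp *ᵥ m + Hᵀ *ᵥ (Wr *ᵥ (y - c)) + lam • (Ws *ᵥ xhat))
    {x : ι → ℝ} (hx : x ≠ x₀) :
    regularizedCost Wp Wr Ws lam m xhat H c y x₀ < regularizedCost Wp Wr Ws lam m xhat H c y x := by
  have hHess : (Wp + Hᵀ * Wr * H + lam • Ws).PosDef := by
    refine (hWp.add_posSemidef ?_).add_posSemidef (hWs.smul hlam)
    simpa using hWr.conjTranspose_mul_mul_same H
  obtain ⟨dx, rfl⟩ : ∃ dx, x = x₀ + dx := ⟨x - x₀, by abel⟩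
  have hcurv : 0 < dx ⬝ᵥ ((Wp + Hᵀ * Wr * H + lam • Ws) *ᵥ dx) := by
    simpa using hHess.dotProduct_mulVec_pos (by simpa using hx)
  rw [regularizedCost_add (isHermitian_iff_isSymm.mp hWp.isHermitian)
    (isHermitian_iff_isSymm.mp hWr.isHermitian) (isHermitian_iff_isSymm.mp hWs.isHermitian),
    hx₀, sub_self, dotProduct_zero, add_zero]
  linarith

end RegularizedCost

/-- sequential Kalman processing of an affine measurement followed by
the LM pseudo-measurement yields the mean that uniquely minimizes the combined
quadratic cost (prior + measurement + LM regularization). -/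
theorem sequential_kalman_updates_minimize_cost
    {n d : ℕ} (m xhat : Fin n → ℝ)
    (P S : Matrix (Fin n) (Fin n) ℝ) (hP : P.PosDef) (hS : S.PosDef)
    (lam : ℝ) (hlam : 0 < lam)
    (H : Matrix (Fin d) (Fin n) ℝ) (c y : Fin d → ℝ)
    (R : Matrix (Fin d) (Fin d) ℝ) (hR : R.PosDef)
    -- first (standard) Kalman update with measurement y = Hx + c + r
    (S0 : Matrix (Fin d) (Fin d) ℝ) (hS0 : S0 = H * P * Hᵀ + R)
    (K0 : Matrix (Fin n) (Fin d) ℝ) (hK0 : K0 = P * Hᵀ * S0⁻¹)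
    (m0 : Fin n → ℝ) (hm0 : m0 = m + K0 *ᵥ (y - (H *ᵥ m + c)))
    (P0 : Matrix (Fin n) (Fin n) ℝ) (hP0 : P0 = P - K0 * S0 * K0ᵀ)
    -- second (pseudo-measurement) Kalman update with x̂ = x + e, e ~ N(0, λ⁻¹S)
    (S1 : Matrix (Fin n) (Fin n) ℝ) (hS1 : S1 = P0 + lam⁻¹ • S)
    (K1 : Matrix (Fin n) (Fin n) ℝ) (hK1 : K1 = P0 * S1⁻¹)
    (m1 : Fin n → ℝ) (hm1 : m1 = m0 + K1 *ᵥ (xhat - m0))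
    (cost : (Fin n → ℝ) → ℝ)
    (hcost : ∀ x, cost x =
      (1 / 2) * ((x - m) ⬝ᵥ (P⁻¹ *ᵥ (x - m))) +
        (1 / 2) * ((y - (H *ᵥ x + c)) ⬝ᵥ (R⁻¹ *ᵥ (y - (H *ᵥ x + c)))) +
        (lam / 2) * ((x - xhat) ⬝ᵥ (S⁻¹ *ᵥ (x - xhat)))) :
    ∀ x : Fin n → ℝ, x ≠ m1 → cost m1 < cost x := by
  intro x hx
  have hP0inv : P0⁻¹ = P⁻¹ + Hᵀ * R⁻¹ * H := hP0 ▸ kalmanUpdate_cov_inv hP hR hS0 hK0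
  have hP0pos : P0.PosDef := hP0 ▸ kalmanUpdate_cov_posDef hP hR hS0 hK0
  have hm0info : (P⁻¹ + Hᵀ * R⁻¹ * H) *ᵥ m0 = P⁻¹ *ᵥ m + Hᵀ *ᵥ (R⁻¹ *ᵥ (y - c)) :=
    hm0 ▸ kalmanUpdate_information_mulVec_mean hP hR hS0 hK0 m y c
  have hm1info : (P0⁻¹ + lam • S⁻¹) *ᵥ m1 = P0⁻¹ *ᵥ m0 + lam • (S⁻¹ *ᵥ xhat) :=
    hm1 ▸ regularizationUpdate_information_mulVec_mean hP0pos hS hlam hS1 hK1 m0 xhat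
  have hnormal : (P⁻¹ + Hᵀ * R⁻¹ * H + lam • S⁻¹) *ᵥ m1 =
      P⁻¹ *ᵥ m + Hᵀ *ᵥ (R⁻¹ *ᵥ (y - c)) + lam • (S⁻¹ *ᵥ xhat) := by
    rwa [hP0inv, hm0info] at hm1info
  rw [show cost = regularizedCost P⁻¹ R⁻¹ S⁻¹ lam m xhat H c y from funext hcost]
  exact regularizedCost_lt_of_normal_eq hP.inv hR.inv.posSemidef
    hS.inv.posSemidef hlam.le hnormal hx
end
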